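/- arXiv:1806.03632 — 4 statements merged into one kernel-verified Lean document; each statement's English description precedes it below -/
import Mathlib

section
/- If A is an invertible n×n complex matrix, S₀ is a positive definite n×n matrix, Π₀ is an n×m matrix satisfying AS₀ - S₀A* = i Π₀ j Π₀* (where j = diag(I_{m₁}, -I_{m₂})), and the sequences are defined recursively by Π_{k+1} = Π_k + i A⁻¹ Π_k j and S_{k+1} = S_k + A⁻¹ S_k (A*)⁻¹ + A⁻¹ Π_k Π_k* (A*)⁻¹, then for every r ≥ 0 the matrix identity A S_r - S_r A* = i Π_r j Π_r* holds. -/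
open Matrix Complex
open scoped ComplexOrder

/-- GBDT matrix identity propagates: if A S₀ - S₀ A* = i Π₀ j Π₀* and the sequences
satisfy the recursions, then A S_r - S_r A* = i Π_r j Π_r* for all r. -/
theorem stmt0 (n m₁ m₂ : ℕ) (hn : 0 < n) (hm₁ : 0 < m₁) (hm₂ : 0 < m₂)
    (A : Matrix (Fin n) (Fin n) ℂ) (hA : IsUnit A.det)
    (S : ℕ → Matrix (Fin n) (Fin n) ℂ)
    (P : ℕ → Matrix (Fin n) (Fin m₁ ⊕ Fin m₂) ℂ)
    (J : Matrix (Fin m₁ ⊕ Fin m₂) (Fin m₁ ⊕ Fin m₂) ℂ)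
    (hJ : J = Matrix.fromBlocks 1 0 0 (-1))
    (hS0 : (S 0).PosDef)
    (hid0 : A * S 0 - S 0 * Aᴴ = Complex.I • (P 0 * J * (P 0)ᴴ))
    (hP : ∀ k, P (k + 1) = P k + Complex.I • (A⁻¹ * P k * J))
    (hS : ∀ k, S (k + 1) = S k + A⁻¹ * S k * (Aᴴ)⁻¹ + A⁻¹ * P k * (P k)ᴴ * (Aᴴ)⁻¹) :
    ∀ r : ℕ, A * S r - S r * Aᴴ = Complex.I • (P r * J * (P r)ᴴ) := by
  have hAH : IsUnit (Aᴴ).det := by rw [Matrix.det_conjTranspose]; exact hA.star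
  have hAB : A * A⁻¹ = 1 := Matrix.mul_nonsing_inv A hA
  have hBA : A⁻¹ * A = 1 := Matrix.nonsing_inv_mul A hA
  have hAC : Aᴴ * (Aᴴ)⁻¹ = 1 := Matrix.mul_nonsing_inv _ hAH
  have hCA : (Aᴴ)⁻¹ * Aᴴ = 1 := Matrix.nonsing_inv_mul _ hAH
  have hBC : (A⁻¹)ᴴ = (Aᴴ)⁻¹ := Matrix.conjTranspose_nonsing_inv A
  have hJH : Jᴴ = J := by
    rw [hJ]
    simp [Matrix.fromBlocks_conjTranspose]
  have hJ2 : J * J = 1 := by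
    rw [hJ]
    simp [Matrix.fromBlocks_multiply, ← Matrix.fromBlocks_one]
  intro r
  induction r with
  | zero => exact hid0
  | succ k ih =>
    have hAS : A * S k = Complex.I • (P k * J * (P k)ᴴ) + S k * Aᴴ := by
      rw [← ih]; abel
    have h1 : S k * (Aᴴ)⁻¹ = A⁻¹ * S k
        + Complex.I • (A⁻¹ * (P k * (J * ((P k)ᴴ * (Aᴴ)⁻¹)))) := by
      calc S k * (Aᴴ)⁻¹ = A⁻¹ * (A * S k) * (Aᴴ)⁻¹ := by
            rw [← Matrix.mul_assoc, hBA, Matrix.one_mul]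
        _ = A⁻¹ * (Complex.I • (P k * J * (P k)ᴴ) + S k * Aᴴ) * (Aᴴ)⁻¹ := by rw [hAS]
        _ = _ := by
            rw [Matrix.mul_add, Matrix.add_mul, Matrix.mul_smul, Matrix.smul_mul]
            simp only [Matrix.mul_assoc, hAC, Matrix.mul_one]
            exact add_comm _ _
    rw [hS k, hP k]
    simp only [Matrix.mul_add, Matrix.add_mul, Matrix.mul_sub, Matrix.sub_mul,
      conjTranspose_add, conjTranspose_smul, conjTranspose_mul, hBC, hJH,
      Matrix.mul_smul, Matrix.smul_mul, smul_smul, Matrix.mul_assoc,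
      Matrix.mul_nonsing_inv_cancel_left _ _ hA,
      Matrix.nonsing_inv_mul_cancel_left _ _ hA]
    rw [hAS]
    rw [h1]
    have hJJn : ∀ (X : Matrix (Fin m₁ ⊕ Fin m₂) (Fin n) ℂ), J * (J * X) = X := fun X => by
      rw [← Matrix.mul_assoc, hJ2, Matrix.one_mul]
    have hsI : (star Complex.I) = -Complex.I := Complex.conj_I
    simp only [hCA, Matrix.mul_one, hJJn, hsI, smul_smul, smul_add,
      Complex.I_mul_I, neg_smul, one_smul, neg_neg, Matrix.mul_add, Matrix.add_mul,
      Matrix.mul_smul, Matrix.smul_mul, Matrix.mul_assoc, mul_neg, neg_mul, mul_one]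
    match_scalars <;> ring_nf <;> simp [pow_succ, Complex.I_mul_I] <;> ring
end

section
/- Let w_A(k, λ) := I_m - i j Π_k* S_k⁻¹ (A - λ I_n)⁻¹ Π_k (the transfer matrix function), with Π_k = [(I + i A⁻¹)^k ϑ₁, (I - i A⁻¹)^k ϑ₂], R_k = (I + i A⁻¹)^{-k} S_k (I - i (A*)⁻¹)^{-k}, Q_k = (I - i A⁻¹)^{-k} S_k (I + i (A*)⁻¹)^{-k}, G(A) = (I + i A⁻¹)⁻¹(I - i A⁻¹). Then for λ = -1/z the following block representation holds: w_A(k, -1/z) = I_m - i z j M where M is the 2×2 block matrix with blocks M₁₁ = ϑ₁* R_k⁻¹ (I + zA)⁻¹ ϑ₁, M₁₂ = ϑ₁* R_k⁻¹ (I + zA)⁻¹ G(A)^k ϑ₂, M₂₁ = ϑ₂* (G(A)^k)* R_k⁻¹ (I + zA)⁻¹ ϑ₁, M₂₂ = ϑ₂* Q_k⁻¹ (I + zA)⁻¹ ϑ₂. -/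
open Matrix Complex
open scoped ComplexOrder

/-!
With `U = 1 + i A⁻¹`, `V = 1 - i A⁻¹` and `W = 1 + z A` one has `(A + z⁻¹)⁻¹ = z W⁻¹`,
`R_k⁻¹ = (U^k)ᴴ S_k⁻¹ U^k`, `Q_k⁻¹ = (V^k)ᴴ S_k⁻¹ V^k` and `G^k = (U^k)⁻¹ V^k`. As `U`, `V`, `W`
are polynomials in `A` and `A⁻¹`, the powers `U^k`, `V^k` commute with `W⁻¹`; moving them past
`W⁻¹`, and writing `V^k = U^k G^k` in the off-diagonal blocks, turns each block of
`Π_kᴴ S_k⁻¹ W⁻¹ Π_k` into the stated one.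
-/

section

variable {n : Type*} [Fintype n]

theorem Matrix.conjTranspose_mul_mul_mul_of_commute {α m₁ m₂ : Type*} [CommSemiring α] [StarRing α]
    {X Y W : Matrix n n α}
    (hYW : Commute Y W) (a : Matrix n m₁ α) (T : Matrix n n α) (b : Matrix n m₂ α) :
    (X * a)ᴴ * T * W * (Y * b) = aᴴ * (Xᴴ * T * Y) * W * b := by
  simp only [conjTranspose_mul, Matrix.mul_assoc]
  rw [← Matrix.mul_assoc W Y b, ← hYW.eq]
  simp only [Matrix.mul_assoc]

variable [DecidableEq n]

theorem Commute.nonsing_inv_right {α : Type*} [CommRing α] {A B : Matrix n n α}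
    (h : Commute A B) : Commute A B⁻¹ := by
  by_cases hB : IsUnit B.det
  · have := B.invertibleOfIsUnitDet hB
    simpa only [invOf_eq_nonsing_inv] using h.invOf_right
  · simp only [nonsing_inv_apply_not_isUnit _ hB, Commute.zero_right]

theorem Commute.nonsing_inv_left {α : Type*} [CommRing α] {A B : Matrix n n α}
    (h : Commute A B) : Commute A⁻¹ B :=
  (h.symm.nonsing_inv_right).symm

namespace Matrix

theorem inv_smul_of_ne_zero {K : Type*} [Field K] {c : K} (hc : c ≠ 0) (M : Matrix n n K) :
    (c • M)⁻¹ = c⁻¹ • M⁻¹ := by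
  by_cases hM : IsUnit M.det
  · exact inv_smul' M (Units.mk0 c hc) hM
  · have hcM : ¬IsUnit (c • M).det := by
      rwa [det_smul, IsUnit.mul_iff, and_iff_right ((isUnit_iff_ne_zero.mpr hc).pow _)]
    rw [nonsing_inv_apply_not_isUnit _ hM, nonsing_inv_apply_not_isUnit _ hcM, smul_zero]

theorem inv_sub_neg_one_div_smul_one {K : Type*} [Field K] (A : Matrix n n K) {z : K}
    (hz : z ≠ 0) : (A - (-1 / z) • 1)⁻¹ = z • (1 + z • A)⁻¹ := by
  have h : A - (-1 / z) • (1 : Matrix n n K) = z⁻¹ • (1 + z • A) := by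
    rw [smul_add, smul_smul, inv_mul_cancel₀ hz, one_smul, neg_div, neg_smul, sub_neg_eq_add,
      one_div, add_comm]
  rw [h, inv_smul_of_ne_zero (inv_ne_zero hz), inv_inv]

theorem isUnit_one_sub_smul_nonsing_inv {K : Type*} [Field K] {A : Matrix n n K}
    (hA : IsUnit A.det) {c : K} (hc : c ∉ spectrum K A) : IsUnit (1 - c • A⁻¹) := by
  rw [spectrum.notMem_iff] at hc
  have h : 1 - c • A⁻¹ = -(A⁻¹ * (algebraMap K (Matrix n n K) c - A)) := by
    rw [Algebra.algebraMap_eq_smul_one, mul_sub, mul_smul_one, nonsing_inv_mul _ hA, neg_sub]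
  rw [h]
  exact ((isUnit_nonsing_inv_iff.mpr ((isUnit_iff_isUnit_det A).mpr hA)).mul hc).neg

theorem conjTranspose_one_add_I_smul_nonsing_inv (A : Matrix n n ℂ) :
    (1 + I • A⁻¹)ᴴ = 1 - I • Aᴴ⁻¹ := by
  rw [conjTranspose_add, conjTranspose_one, conjTranspose_smul, conjTranspose_nonsing_inv,
    star_def, conj_I, neg_smul, sub_eq_add_neg]

theorem conjTranspose_one_sub_I_smul_nonsing_inv (A : Matrix n n ℂ) :
    (1 - I • A⁻¹)ᴴ = 1 + I • Aᴴ⁻¹ := by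
  rw [conjTranspose_sub, conjTranspose_one, conjTranspose_smul, conjTranspose_nonsing_inv,
    star_def, conj_I, neg_smul, sub_neg_eq_add]

variable {α : Type*} [CommRing α] [StarRing α]

theorem inv_nonsing_inv_mul_mul_nonsing_inv_conjTranspose {X : Matrix n n α}
    (hX : IsUnit X.det) (S : Matrix n n α) : (X⁻¹ * S * Xᴴ⁻¹)⁻¹ = Xᴴ * S⁻¹ * X := by
  have hXH : IsUnit Xᴴ.det := by rw [det_conjTranspose]; exact hX.star
  rw [mul_inv_rev, mul_inv_rev, nonsing_inv_nonsing_inv _ hX, nonsing_inv_nonsing_inv _ hXH,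
    Matrix.mul_assoc]

theorem conjTranspose_fromCols_mul_mul_fromCols {m₁ m₂ : Type*} {X Y W : Matrix n n α}
    (hX : IsUnit X.det) (hXW : Commute X W) (hYW : Commute Y W) (T : Matrix n n α)
    (θ₁ : Matrix n m₁ α) (θ₂ : Matrix n m₂ α) :
    (fromCols (X * θ₁) (Y * θ₂))ᴴ * T * W * fromCols (X * θ₁) (Y * θ₂) =
      fromBlocks
        (θ₁ᴴ * (Xᴴ * T * X) * W * θ₁)
        (θ₁ᴴ * (Xᴴ * T * X) * W * (X⁻¹ * Y) * θ₂)
        (θ₂ᴴ * (X⁻¹ * Y)ᴴ * (Xᴴ * T * X) * W * θ₁)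
        (θ₂ᴴ * (Yᴴ * T * Y) * W * θ₂) := by
  have hY : Y * θ₂ = X * (X⁻¹ * Y * θ₂) := by
    rw [← Matrix.mul_assoc, ← Matrix.mul_assoc, mul_nonsing_inv _ hX, Matrix.one_mul]
  rw [conjTranspose_fromCols_eq_fromRows_conjTranspose, fromRows_mul, fromRows_mul,
    fromRows_mul_fromCols]
  congr 1
  · exact conjTranspose_mul_mul_mul_of_commute hXW θ₁ T θ₁
  · rw [hY, conjTranspose_mul_mul_mul_of_commute hXW, ← Matrix.mul_assoc _ (X⁻¹ * Y) θ₂]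
  · rw [hY, conjTranspose_mul_mul_mul_of_commute hXW, conjTranspose_mul]
  · exact conjTranspose_mul_mul_mul_of_commute hYW θ₂ T θ₂

end Matrix

end

theorem stmt11_general (n m₁ m₂ : ℕ)
    (A : Matrix (Fin n) (Fin n) ℂ) (hA : IsUnit A.det)
    (hi : Complex.I ∉ spectrum ℂ A) (hmi : -Complex.I ∉ spectrum ℂ A)
    (θ₁ : Matrix (Fin n) (Fin m₁) ℂ) (θ₂ : Matrix (Fin n) (Fin m₂) ℂ)
    (J : Matrix (Fin m₁ ⊕ Fin m₂) (Fin m₁ ⊕ Fin m₂) ℂ)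
    (P : ℕ → Matrix (Fin n) (Fin m₁ ⊕ Fin m₂) ℂ)
    (hPdef : ∀ r, P r = Matrix.fromCols ((1 + Complex.I • A⁻¹) ^ r * θ₁)
      ((1 - Complex.I • A⁻¹) ^ r * θ₂))
    (S : ℕ → Matrix (Fin n) (Fin n) ℂ)
    (R Q : ℕ → Matrix (Fin n) (Fin n) ℂ)
    (hR : ∀ r, R r = ((1 + Complex.I • A⁻¹) ^ r)⁻¹ * S r *
      (((1 - Complex.I • Aᴴ⁻¹) ^ r)⁻¹))
    (hQ : ∀ r, Q r = ((1 - Complex.I • A⁻¹) ^ r)⁻¹ * S r *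
      (((1 + Complex.I • Aᴴ⁻¹) ^ r)⁻¹))
    (G : Matrix (Fin n) (Fin n) ℂ)
    (hG : G = (1 + Complex.I • A⁻¹)⁻¹ * (1 - Complex.I • A⁻¹))
    (z : ℂ) (hz : z ≠ 0) (k : ℕ) :
    1 - Complex.I • (J * (P k)ᴴ * (S k)⁻¹ * (A - (-1 / z) • 1)⁻¹ * P k) =
      1 - (Complex.I * z) • (J *
        Matrix.fromBlocks
          (θ₁ᴴ * (R k)⁻¹ * (1 + z • A)⁻¹ * θ₁)
          (θ₁ᴴ * (R k)⁻¹ * (1 + z • A)⁻¹ * (G ^ k) * θ₂)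
          (θ₂ᴴ * ((G ^ k)ᴴ) * (R k)⁻¹ * (1 + z • A)⁻¹ * θ₁)
          (θ₂ᴴ * (Q k)⁻¹ * (1 + z • A)⁻¹ * θ₂)) := by
  have hU : IsUnit (1 + I • A⁻¹) := by
    simpa only [neg_smul, sub_neg_eq_add] using isUnit_one_sub_smul_nonsing_inv hA hmi
  have hUk : IsUnit ((1 + I • A⁻¹) ^ k).det := (isUnit_iff_isUnit_det _).mp (hU.pow k)
  have hVk : IsUnit ((1 - I • A⁻¹) ^ k).det :=
    (isUnit_iff_isUnit_det _).mp ((isUnit_one_sub_smul_nonsing_inv hA hi).pow k)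
  have hAW : Commute A⁻¹ (1 + z • A) :=
    (Commute.one_right _).add_right ((Commute.refl A).nonsing_inv_left.smul_right z)
  have hUW := (((Commute.one_left _).add_left (hAW.smul_left I)).pow_left k).nonsing_inv_right
  have hVW := (((Commute.one_left _).sub_left (hAW.smul_left I)).pow_left k).nonsing_inv_right
  have hUV : Commute (1 + I • A⁻¹) (1 - I • A⁻¹) :=
    (Commute.one_right _).sub_right ((Commute.one_left _).add_left (Commute.refl _))
  have hGk : G ^ k = ((1 + I • A⁻¹) ^ k)⁻¹ * (1 - I • A⁻¹) ^ k := by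
    rw [hG, hUV.nonsing_inv_left.mul_pow, inv_pow']
  have hRinv : (R k)⁻¹ = ((1 + I • A⁻¹) ^ k)ᴴ * (S k)⁻¹ * (1 + I • A⁻¹) ^ k := by
    rw [hR, ← conjTranspose_one_add_I_smul_nonsing_inv, ← conjTranspose_pow,
      inv_nonsing_inv_mul_mul_nonsing_inv_conjTranspose hUk]
  have hQinv : (Q k)⁻¹ = ((1 - I • A⁻¹) ^ k)ᴴ * (S k)⁻¹ * (1 - I • A⁻¹) ^ k := by
    rw [hQ, ← conjTranspose_one_sub_I_smul_nonsing_inv, ← conjTranspose_pow,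
      inv_nonsing_inv_mul_mul_nonsing_inv_conjTranspose hVk]
  have hblocks := conjTranspose_fromCols_mul_mul_fromCols hUk hUW hVW (S k)⁻¹ θ₁ θ₂
  rw [← hPdef, ← hRinv, ← hQinv, ← hGk] at hblocks
  rw [inv_sub_neg_one_div_smul_one A hz, Matrix.mul_smul, Matrix.smul_mul, smul_smul, ← hblocks]
  simp only [Matrix.mul_assoc]

/-- Block representation (R2) of the transfer matrix w_A(k, -1/z). -/
theorem stmt11 (n m₁ m₂ : ℕ) (hn : 0 < n)
    (A : Matrix (Fin n) (Fin n) ℂ) (hA : IsUnit A.det)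
    (hi : Complex.I ∉ spectrum ℂ A) (hmi : -Complex.I ∉ spectrum ℂ A)
    (θ₁ : Matrix (Fin n) (Fin m₁) ℂ) (θ₂ : Matrix (Fin n) (Fin m₂) ℂ)
    (J : Matrix (Fin m₁ ⊕ Fin m₂) (Fin m₁ ⊕ Fin m₂) ℂ)
    (hJ : J = Matrix.fromBlocks 1 0 0 (-1))
    (P : ℕ → Matrix (Fin n) (Fin m₁ ⊕ Fin m₂) ℂ)
    (hPdef : ∀ r, P r = Matrix.fromCols ((1 + Complex.I • A⁻¹) ^ r * θ₁)
      ((1 - Complex.I • A⁻¹) ^ r * θ₂))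
    (S : ℕ → Matrix (Fin n) (Fin n) ℂ) (hSpos : ∀ r, (S r).PosDef)
    (R Q : ℕ → Matrix (Fin n) (Fin n) ℂ)
    (hR : ∀ r, R r = ((1 + Complex.I • A⁻¹) ^ r)⁻¹ * S r *
      (((1 - Complex.I • Aᴴ⁻¹) ^ r)⁻¹))
    (hQ : ∀ r, Q r = ((1 - Complex.I • A⁻¹) ^ r)⁻¹ * S r *
      (((1 + Complex.I • Aᴴ⁻¹) ^ r)⁻¹))
    (G : Matrix (Fin n) (Fin n) ℂ)
    (hG : G = (1 + Complex.I • A⁻¹)⁻¹ * (1 - Complex.I • A⁻¹))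
    (z : ℂ) (hz : z ≠ 0) (hzA : IsUnit (1 + z • A).det) (k : ℕ) :
    1 - Complex.I • (J * (P k)ᴴ * (S k)⁻¹ * (A - (-1 / z) • 1)⁻¹ * P k) =
      1 - (Complex.I * z) • (J *
        Matrix.fromBlocks
          (θ₁ᴴ * (R k)⁻¹ * (1 + z • A)⁻¹ * θ₁)
          (θ₁ᴴ * (R k)⁻¹ * (1 + z • A)⁻¹ * (G ^ k) * θ₂)
          (θ₂ᴴ * ((G ^ k)ᴴ) * (R k)⁻¹ * (1 + z • A)⁻¹ * θ₁)
          (θ₂ᴴ * (Q k)⁻¹ * (1 + z • A)⁻¹ * θ₂)) :=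
  stmt11_general n m₁ m₂ A hA hi hmi θ₁ θ₂ J P hPdef S R Q hR hQ G hG z hz k
end

section
/- In the skew-self-adjoint case, if A is invertible, S₀ > 0, AS₀ - S₀A* = i Π₀ Π₀*, and the sequences satisfy Π_{k+1} = Π_k + i A⁻¹ Π_k j and S_{k+1} = S_k + A⁻¹ S_k (A*)⁻¹ + A⁻¹ Π_k j Π_k* (A*)⁻¹, then the identity A S_r - S_r A* = i Π_r Π_r* holds for all r ≥ 0. -/
open Matrix Complex
open scoped ComplexOrder

/-- Skew-self-adjoint case: the identity A S_r - S_r A* = i Π_r Π_r*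
propagates along the GBDT recursions. -/
theorem stmt13 (n m₁ m₂ : ℕ) (hn : 0 < n) (hm₁ : 0 < m₁) (hm₂ : 0 < m₂)
    (A : Matrix (Fin n) (Fin n) ℂ) (hA : IsUnit A.det)
    (J : Matrix (Fin m₁ ⊕ Fin m₂) (Fin m₁ ⊕ Fin m₂) ℂ)
    (hJ : J = Matrix.fromBlocks 1 0 0 (-1))
    (S : ℕ → Matrix (Fin n) (Fin n) ℂ)
    (P : ℕ → Matrix (Fin n) (Fin m₁ ⊕ Fin m₂) ℂ)
    (hS0 : (S 0).PosDef)
    (hid0 : A * S 0 - S 0 * Aᴴ = Complex.I • (P 0 * (P 0)ᴴ))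
    (hP : ∀ k, P (k + 1) = P k + Complex.I • (A⁻¹ * P k * J))
    (hS : ∀ k, S (k + 1) = S k + A⁻¹ * S k * (Aᴴ)⁻¹ + A⁻¹ * P k * J * (P k)ᴴ * (Aᴴ)⁻¹) :
    ∀ r : ℕ, A * S r - S r * Aᴴ = Complex.I • (P r * (P r)ᴴ) := by
  have hA' : IsUnit Aᴴ.det := by simpa [Matrix.det_conjTranspose] using hA.star
  have hJH : Jᴴ = J := by subst hJ; simp [Matrix.fromBlocks_conjTranspose]
  have hJJ : J * J = 1 := by subst hJ; simp [Matrix.fromBlocks_multiply]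
  have hJJ2 : ∀ (X : Matrix (Fin m₁ ⊕ Fin m₂) (Fin n) ℂ), J * (J * X) = X := fun X => by
    rw [← Matrix.mul_assoc, hJJ, Matrix.one_mul]
  intro r
  induction r with
  | zero => exact hid0
  | succ k ih =>
    rw [hS k, hP k]
    have key : S k * (Aᴴ)⁻¹ - A⁻¹ * S k
        = Complex.I • (A⁻¹ * (P k * ((P k)ᴴ * (Aᴴ)⁻¹))) := by
      have := congrArg (fun X => A⁻¹ * X * (Aᴴ)⁻¹) ih
      simpa [Matrix.mul_sub, Matrix.sub_mul, Matrix.mul_assoc,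
        Matrix.nonsing_inv_mul_cancel_left _ _ hA,
        Matrix.mul_nonsing_inv _ hA', Matrix.mul_smul, Matrix.smul_mul] using this
    have ih' : A * S k = S k * Aᴴ + Complex.I • (P k * (P k)ᴴ) := by
      rw [← ih]; abel
    have key' : S k * (Aᴴ)⁻¹
        = A⁻¹ * S k + Complex.I • (A⁻¹ * (P k * ((P k)ᴴ * (Aᴴ)⁻¹))) := by
      rw [← key]; abel
    simp only [Matrix.mul_add, Matrix.add_mul, Matrix.conjTranspose_add,
      Matrix.conjTranspose_smul, Matrix.conjTranspose_mul, hJH,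
      Matrix.conjTranspose_nonsing_inv, Matrix.smul_mul, Matrix.mul_smul,
      smul_smul, Complex.I_mul_I, Matrix.mul_assoc,
      Matrix.nonsing_inv_mul_cancel_left _ _ hA,
      Matrix.mul_nonsing_inv_cancel_left _ _ hA,
      star_smul, RCLike.star_def, Complex.conj_I, neg_smul, smul_neg]
    rw [smul_add, smul_add, smul_add]
    simp only [Matrix.nonsing_inv_mul _ hA', Matrix.mul_one, Matrix.mul_neg,
      Matrix.mul_smul, smul_neg, smul_smul, Complex.I_mul_I, neg_smul, one_smul,
      neg_neg, hJJ2, ih', key']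
    abel
end

section
/- In the skew-self-adjoint setting with w_A(k, λ) = I_m - i Π_k* S_k⁻¹ (A - λI)⁻¹ Π_k, Π_k = [(I + iA⁻¹)^k ϑ₁, (I - iA⁻¹)^k ϑ₂], Q_k = (I - iA⁻¹)^{-k} S_k (I + i(A*)⁻¹)^{-k}, and G̃(A) = (A - iI)⁻¹(A + iI), one has the column representation: w_A(k, -z) [0; I_{m₂}] = [0; I_{m₂}] - i [ϑ₁* (G̃(A)^k)* Q_k⁻¹ (zI + A)⁻¹ ϑ₂ ; ϑ₂* Q_k⁻¹ (zI + A)⁻¹ ϑ₂]. -/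
open Matrix Complex
open scoped ComplexOrder

/-!
Write `B = 1 - i A⁻¹` and `C = 1 + i A⁻¹`, so that `Π_k = [C^k ϑ₁, B^k ϑ₂]`. Since
`B = A⁻¹ (A - iI)` and `C = A⁻¹ (A + iI)`, the Cayley transform factors as `C = B G̃(A)` with
`B` and `G̃(A)` commuting, hence `C^k = B^k G̃(A)^k`. Moreover `Q_k⁻¹ = (B^k)* S_k⁻¹ B^k`,
and `B^k` commutes with `(zI + A)⁻¹`. Multiplying `w_A(k, -z)` by `[0; I]` picks out the
`ϑ₂`-column of `Π_k`, and the two blocks then match after moving `B^k` past `(zI + A)⁻¹`.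
-/

namespace Matrix

variable {n : Type*} [Fintype n]

theorem one_sub_smul_conjTranspose_fromCols_mul_fromRows_zero_one {α : Type*} [Ring α]
    [Star α] {m₁ m₂ : Type*} [Fintype m₁] [Fintype m₂] [DecidableEq m₁]
    [DecidableEq m₂] (X : Matrix n m₁ α) (Y : Matrix n m₂ α) (M : Matrix n n α) (c : α) :
    (1 - c • ((fromCols X Y)ᴴ * M * fromCols X Y)) *
        (fromRows 0 1 : Matrix (m₁ ⊕ m₂) m₂ α) =
      fromRows 0 1 - c • fromRows (Xᴴ * M * Y) (Yᴴ * M * Y) := by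
  rw [Matrix.sub_mul, Matrix.one_mul, Matrix.smul_mul, Matrix.mul_assoc ((fromCols X Y)ᴴ * M),
    fromCols_mul_fromRows, Matrix.mul_zero, Matrix.mul_one, zero_add,
    conjTranspose_fromCols_eq_fromRows_conjTranspose,
    fromRows_mul, fromRows_mul]

variable [DecidableEq n]

section CommRing

variable {α : Type*} [CommRing α]

/-- For a singular `B` this holds because `B⁻¹ = 0`. -/
theorem commute_nonsing_inv_right {A B : Matrix n n α} (h : Commute A B) :
    Commute A B⁻¹ := by
  by_cases hB : IsUnit B.det
  · obtain ⟨u, rfl⟩ := (isUnit_iff_isUnit_det B).mpr hB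
    rw [← coe_units_inv]
    exact h.units_inv_right
  · rw [nonsing_inv_apply_not_isUnit _ hB]
    exact Commute.zero_right A

theorem isUnit_det_sub_smul_one_of_notMem_spectrum {A : Matrix n n α} {c : α}
    (h : c ∉ spectrum α A) : IsUnit (A - c • 1).det := by
  rw [spectrum.notMem_iff, Algebra.algebraMap_eq_smul_one] at h
  simpa only [neg_sub, isUnit_iff_isUnit_det] using h.neg

theorem one_sub_smul_nonsing_inv {A : Matrix n n α} (hA : IsUnit A.det) (c : α) :
    1 - c • A⁻¹ = A⁻¹ * (A - c • 1) := by
  rw [mul_sub, nonsing_inv_mul _ hA, Matrix.mul_smul, Matrix.mul_one]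

theorem one_add_smul_nonsing_inv {A : Matrix n n α} (hA : IsUnit A.det) (c : α) :
    1 + c • A⁻¹ = A⁻¹ * (A + c • 1) := by
  rw [mul_add, nonsing_inv_mul _ hA, Matrix.mul_smul, Matrix.mul_one]

theorem commute_one_sub_smul_nonsing_inv_cayley (A : Matrix n n α) (c : α) :
    Commute (1 - c • A⁻¹) ((A - c • 1)⁻¹ * (A + c • 1)) := by
  have hA : Commute A⁻¹ A := (commute_nonsing_inv_right (Commute.refl A)).symm
  have hG : Commute A⁻¹ ((A - c • 1)⁻¹ * (A + c • 1)) :=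
    (commute_nonsing_inv_right (hA.sub_right ((Commute.one_right _).smul_right c))).mul_right
      (hA.add_right ((Commute.one_right _).smul_right c))
  exact (Commute.one_left _).sub_left (hG.smul_left c)

theorem one_add_smul_nonsing_inv_pow {A : Matrix n n α} {c : α} (hA : IsUnit A.det)
    (hc : IsUnit (A - c • 1).det) (k : ℕ) :
    (1 + c • A⁻¹) ^ k = (1 - c • A⁻¹) ^ k * ((A - c • 1)⁻¹ * (A + c • 1)) ^ k := by
  have hfactor : 1 + c • A⁻¹ = (1 - c • A⁻¹) * ((A - c • 1)⁻¹ * (A + c • 1)) := by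
    rw [one_add_smul_nonsing_inv hA, one_sub_smul_nonsing_inv hA, mul_assoc,
      ← mul_assoc (A - c • 1), mul_nonsing_inv _ hc, one_mul]
  rw [hfactor, (commute_one_sub_smul_nonsing_inv_cayley A c).mul_pow]

end CommRing

theorem nonsing_inv_mul_mul_conjTranspose_nonsing_inv_inv {α : Type*} [CommRing α] [StarRing α]
    {B : Matrix n n α} (hB : IsUnit B.det) (S : Matrix n n α) :
    (B⁻¹ * S * Bᴴ⁻¹)⁻¹ = Bᴴ * S⁻¹ * B := by
  have hBH : IsUnit Bᴴ.det := by rw [det_conjTranspose]; exact hB.star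
  rw [mul_inv_rev, mul_inv_rev, nonsing_inv_nonsing_inv _ hB, nonsing_inv_nonsing_inv _ hBH,
    mul_assoc]

end Matrix

theorem stmt14_general (n m₁ m₂ : ℕ)
    (A : Matrix (Fin n) (Fin n) ℂ) (hA : IsUnit A.det)
    (hi : Complex.I ∉ spectrum ℂ A)
    (θ₁ : Matrix (Fin n) (Fin m₁) ℂ) (θ₂ : Matrix (Fin n) (Fin m₂) ℂ)
    (P : ℕ → Matrix (Fin n) (Fin m₁ ⊕ Fin m₂) ℂ)
    (hPdef : ∀ r, P r = Matrix.fromCols ((1 + Complex.I • A⁻¹) ^ r * θ₁)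
      ((1 - Complex.I • A⁻¹) ^ r * θ₂))
    (S : ℕ → Matrix (Fin n) (Fin n) ℂ)
    (Q : ℕ → Matrix (Fin n) (Fin n) ℂ)
    (hQ : ∀ r, Q r = ((1 - Complex.I • A⁻¹) ^ r)⁻¹ * S r *
      (((1 + Complex.I • Aᴴ⁻¹) ^ r)⁻¹))
    (G : Matrix (Fin n) (Fin n) ℂ)
    (hG : G = (A - Complex.I • 1)⁻¹ * (A + Complex.I • 1))
    (z : ℂ) (k : ℕ) :
    (1 - Complex.I • ((P k)ᴴ * (S k)⁻¹ * (A - (-z) • 1)⁻¹ * P k)) *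
        (Matrix.fromRows 0 1 : Matrix (Fin m₁ ⊕ Fin m₂) (Fin m₂) ℂ) =
      Matrix.fromRows (0 : Matrix (Fin m₁) (Fin m₂) ℂ) 1 -
        Complex.I • Matrix.fromRows
          (θ₁ᴴ * ((G ^ k)ᴴ) * (Q k)⁻¹ * (z • 1 + A)⁻¹ * θ₂)
          (θ₂ᴴ * (Q k)⁻¹ * (z • 1 + A)⁻¹ * θ₂) := by
  set B := 1 - I • A⁻¹ with hB
  have hAi := isUnit_det_sub_smul_one_of_notMem_spectrum hi
  have hBk : IsUnit (B ^ k).det := by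
    rw [det_pow, hB, one_sub_smul_nonsing_inv hA, det_mul]
    exact ((isUnit_nonsing_inv_det A hA).mul hAi).pow k
  have hQinv : (Q k)⁻¹ = (B ^ k)ᴴ * (S k)⁻¹ * B ^ k := by
    rw [hQ, ← conjTranspose_one_sub_I_smul_nonsing_inv, ← conjTranspose_pow,
      nonsing_inv_mul_mul_conjTranspose_nonsing_inv_inv hBk]
  have hZ : A - (-z) • (1 : Matrix (Fin n) (Fin n) ℂ) = z • 1 + A := by
    rw [neg_smul, sub_neg_eq_add, add_comm]
  have hC : (1 + I • A⁻¹) ^ k = B ^ k * G ^ k := by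
    rw [hG, one_add_smul_nonsing_inv_pow hA hAi]
  have hBZ : Commute (B ^ k) (z • 1 + A)⁻¹ := by
    have hAZ : Commute A⁻¹ (z • 1 + A) :=
      ((Commute.one_right A⁻¹).smul_right z).add_right
        (commute_nonsing_inv_right (Commute.refl A)).symm
    exact commute_nonsing_inv_right (((Commute.one_left _).sub_left (hAZ.smul_left I)).pow_left k)
  have hswap : B ^ k * ((z • 1 + A)⁻¹ * θ₂) = (z • 1 + A)⁻¹ * (B ^ k * θ₂) := by
    rw [← Matrix.mul_assoc, hBZ.eq, Matrix.mul_assoc]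
  rw [hPdef, hZ, Matrix.mul_assoc _ (S k)⁻¹,
    one_sub_smul_conjTranspose_fromCols_mul_fromRows_zero_one, hC, hQinv]
  simp only [conjTranspose_mul, Matrix.mul_assoc, hswap]

/-- Column representation (R13) of w_A(k, -z) applied to [0; I_{m₂}]
in the skew-self-adjoint setting. -/
theorem stmt14 (n m₁ m₂ : ℕ) (hn : 0 < n)
    (A : Matrix (Fin n) (Fin n) ℂ) (hA : IsUnit A.det)
    (hi : Complex.I ∉ spectrum ℂ A) (hmi : -Complex.I ∉ spectrum ℂ A)
    (θ₁ : Matrix (Fin n) (Fin m₁) ℂ) (θ₂ : Matrix (Fin n) (Fin m₂) ℂ)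
    (P : ℕ → Matrix (Fin n) (Fin m₁ ⊕ Fin m₂) ℂ)
    (hPdef : ∀ r, P r = Matrix.fromCols ((1 + Complex.I • A⁻¹) ^ r * θ₁)
      ((1 - Complex.I • A⁻¹) ^ r * θ₂))
    (S : ℕ → Matrix (Fin n) (Fin n) ℂ) (hSpos : ∀ r, (S r).PosDef)
    (Q : ℕ → Matrix (Fin n) (Fin n) ℂ)
    (hQ : ∀ r, Q r = ((1 - Complex.I • A⁻¹) ^ r)⁻¹ * S r *
      (((1 + Complex.I • Aᴴ⁻¹) ^ r)⁻¹))
    (G : Matrix (Fin n) (Fin n) ℂ)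
    (hG : G = (A - Complex.I • 1)⁻¹ * (A + Complex.I • 1))
    (z : ℂ) (hzA : IsUnit (z • 1 + A).det) (k : ℕ) :
    (1 - Complex.I • ((P k)ᴴ * (S k)⁻¹ * (A - (-z) • 1)⁻¹ * P k)) *
        (Matrix.fromRows 0 1 : Matrix (Fin m₁ ⊕ Fin m₂) (Fin m₂) ℂ) =
      Matrix.fromRows (0 : Matrix (Fin m₁) (Fin m₂) ℂ) 1 -
        Complex.I • Matrix.fromRows
          (θ₁ᴴ * ((G ^ k)ᴴ) * (Q k)⁻¹ * (z • 1 + A)⁻¹ * θ₂)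
          (θ₂ᴴ * (Q k)⁻¹ * (z • 1 + A)⁻¹ * θ₂) :=
  stmt14_general n m₁ m₂ A hA hi θ₁ θ₂ P hPdef S Q hQ G hG z k
end
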